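/- Let u₁ and u₂ be nonzero Laurent polynomials over ℂ having symmetry with types ε₁ z^{c₁} and ε₂ z^{c₂}, and let r be a greatest common divisor of u₁ and u₂ having symmetry. Then there exists a strongly invertible 2×2 matrix P of Laurent polynomials, all of whose entries have symmetry, such that P(z)·(u₁(z), u₂(z))ᵀ = (r(z), 0)ᵀ, and the entries of P admit symmetry types satisfying (type of P_{j,1})·ε₁z^{c₁} = (type of P_{j,2})·ε₂z^{c₂} for j = 1, 2 (so that, in particular, P has compatible symmetry). -/

import Mathlib

/-!
Write `uᵢ = r vᵢ`. Since `r ≠ 0` is symmetric, cancelling it shows that `vᵢ` has symmetry type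
`εᵢ ε_r z^{cᵢ - c_r}`, and since `ℂ[z, z⁻¹]` is a localization of `ℂ[z]` it is a principal ideal
domain, so `a v₁ + b v₂ = 1` for some `a`, `b`. Taking the symmetric part of type `z⁰` of this
identity replaces `a` and `b` by their parts of the types `εᵢ ε_r z^{c_r - cᵢ}` without breaking
it. Then `P = [[a, b], [-v₂, v₁]]` has determinant `1` and maps `(u₁, u₂)` to `(r, 0)`.
-/

open LaurentPolynomial Matrix
open scoped Classical

noncomputable section

abbrev LP := LaurentPolynomial ℂ

namespace QT

/-- The coefficient of `z^k` in a Laurent polynomial. -/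
def coeff (u : LP) (k : ℤ) : ℂ := (AddMonoidAlgebra.coeff u) k

/-- The Hermitian conjugate `u⋆(z) = Σ conj(u(k)) z^{-k}`. -/
def hstar (u : LP) : LP :=
  AddMonoidAlgebra.ofCoeff
    (Finsupp.mapDomain (fun k => -k)
      (Finsupp.mapRange (starRingEnd ℂ) (map_zero _) (AddMonoidAlgebra.coeff u)))

/-- `u` has symmetry with type `ε z^c`, i.e. `u(k) = ε u(c-k)` for all `k`. -/
def SymT (u : LP) (ε : ℂ) (c : ℤ) : Prop := ∀ k : ℤ, coeff u k = ε * coeff u (c - k)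

def Sgn (ε : ℂ) : Prop := ε = 1 ∨ ε = -1

/-- `u` has symmetry (with some type). -/
def HasSym (u : LP) : Prop := ∃ ε c, Sgn ε ∧ SymT u ε c

/-- The Laurent polynomial `z - a`. -/
def zsub (a : ℂ) : LP := T 1 - LaurentPolynomial.C a

/-- `m` is the multiplicity of `z₀` as a zero of `u`. -/
def mzIs (u : LP) (z₀ : ℂ) (m : ℕ) : Prop := zsub z₀ ^ m ∣ u ∧ ¬ zsub z₀ ^ (m + 1) ∣ u

/-- The multiplicity of `z₀` as a zero of `u`, as a function. -/
def mzF (u : LP) (z₀ : ℂ) : ℕ := sSup {m : ℕ | zsub z₀ ^ m ∣ u}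

/-- The difference-of-(Hermitian)-squares property with respect to symmetry type `ε z^c`. -/
def DOS (u : LP) (ε : ℂ) (c : ℤ) : Prop :=
  ∃ (u₁ u₂ : LP) (ε₁ ε₂ : ℂ) (c₁ c₂ : ℤ),
    Sgn ε₁ ∧ Sgn ε₂ ∧ SymT u₁ ε₁ c₁ ∧ SymT u₂ ε₂ c₂ ∧
    u₁ * hstar u₁ - u₂ * hstar u₂ = u ∧ ε₁ * ε₂ = ε ∧ c₁ - c₂ = c

/-- Degree: the largest exponent with nonzero coefficient (0 for the zero polynomial). -/
def degL (u : LP) : ℤ :=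
  if h : u = 0 then 0
  else (AddMonoidAlgebra.coeff u).support.max'
    (Finsupp.support_nonempty_iff.mpr (AddMonoidAlgebra.coeff_eq_zero.not.mpr h))

/-- Lower degree: the smallest exponent with nonzero coefficient (0 for zero). -/
def ldegL (u : LP) : ℤ :=
  if h : u = 0 then 0
  else (AddMonoidAlgebra.coeff u).support.min'
    (Finsupp.support_nonempty_iff.mpr (AddMonoidAlgebra.coeff_eq_zero.not.mpr h))

/-- Length `deg - ldeg`, with `len 0 = ⊥`. -/
def lenL (u : LP) : WithBot ℤ := if u = 0 then ⊥ else ((degL u - ldegL u : ℤ) : WithBot ℤ)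

/-- `g` is a greatest common divisor of `a` and `b`. -/
def IsGCD2 (g a b : LP) : Prop := g ∣ a ∧ g ∣ b ∧ ∀ e : LP, e ∣ a → e ∣ b → e ∣ g

/-- `g` is a greatest common divisor of `a`, `b`, `c`, `d`. -/
def IsGCD4 (g a b c d : LP) : Prop :=
  g ∣ a ∧ g ∣ b ∧ g ∣ c ∧ g ∣ d ∧ ∀ e : LP, e ∣ a → e ∣ b → e ∣ c → e ∣ d → e ∣ g

/-- The Hermitian conjugate transpose of a matrix of Laurent polynomials. -/
def hstarM (A : Matrix (Fin 2) (Fin 2) LP) : Matrix (Fin 2) (Fin 2) LP :=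
  fun i j => hstar (A j i)

def IsHerm (A : Matrix (Fin 2) (Fin 2) LP) : Prop := hstarM A = A

/-- `diag(1, -1)`. -/
def Jmat : Matrix (Fin 2) (Fin 2) LP := Matrix.diagonal ![1, -1]

/-- A square matrix of Laurent polynomials is strongly invertible if its determinant is a
nonzero monomial. -/
def StrongInv (A : Matrix (Fin 2) (Fin 2) LP) : Prop :=
  ∃ (lam : ℂ) (k : ℤ), lam ≠ 0 ∧ A.det = LaurentPolynomial.C lam * T k

/-- Compatible symmetry for a `2×2` matrix of Laurent polynomials. -/
def CompatSym (A : Matrix (Fin 2) (Fin 2) LP) : Prop :=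
  ∃ (ε ε' : Fin 2 → ℂ) (c c' : Fin 2 → ℤ),
    (∀ j, Sgn (ε j)) ∧ (∀ k, Sgn (ε' k)) ∧
    ∀ j k, SymT (A j k) (ε j * ε' k) (c' k - c j)

/-- Substitution `z ↦ z²`. -/
def sqDom (u : LP) : LP :=
  AddMonoidAlgebra.ofCoeff (Finsupp.mapDomain (fun k => 2 * k) (AddMonoidAlgebra.coeff u))

/-- Substitution `z ↦ -z`. -/
def negSub (u : LP) : LP :=
  (AddMonoidAlgebra.coeff u).sum fun k c =>
    (AddMonoidAlgebra.ofCoeff (Finsupp.single k ((-1 : ℂ) ^ k * c)) : LP)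

/-- The `γ`-coset `u^{[γ]}(z) = Σ_k u(γ + 2k) z^k`. -/
def cosetL (u : LP) (γ : ℤ) : LP :=
  AddMonoidAlgebra.ofCoeff
    (Finsupp.comapDomain (fun k : ℤ => γ + 2 * k) (AddMonoidAlgebra.coeff u)
      (by intro a _ b _ h; simp only at h; omega))

/-- Evaluation of a Laurent polynomial at a point. -/
def evalL (u : LP) (z : ℂ) : ℂ := (AddMonoidAlgebra.coeff u).sum fun k c => c * z ^ k

/-- `{a; b₁, b₂}_{Θ,(1,-1)}` is a quasi-tight framelet filter bank. -/
def QTFB (a Θ b₁ b₂ : LP) : Prop :=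
  sqDom Θ * hstar a * a + hstar b₁ * b₁ - hstar b₂ * b₂ = Θ ∧
  sqDom Θ * hstar a * negSub a + hstar b₁ * negSub b₁ - hstar b₂ * negSub b₂ = 0

/-- The matrix `N_{a,Θ|n_b}` built from the quotients `A`, `B`. -/
def Nmat (A B : LP) : Matrix (Fin 2) (Fin 2) LP :=
  LaurentPolynomial.C (2 : ℂ)⁻¹ •
    !![cosetL A 0 + cosetL B 0, cosetL A 1 - cosetL B 1;
       T 1 * (cosetL A 1 + cosetL B 1), cosetL A 0 - cosetL B 0]

end QT

theorem IsLocalization.isPrincipalIdealRing {R S : Type*} [CommRing R] [CommRing S] [Algebra R S]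
    (M : Submonoid R) [IsLocalization M S] [IsPrincipalIdealRing R] : IsPrincipalIdealRing S :=
  ⟨fun J => IsLocalization.map_under M S J ▸ (IsPrincipalIdealRing.principal _).map_ringHom _⟩

instance LaurentPolynomial.isPrincipalIdealRing {K : Type*} [Field K] :
    IsPrincipalIdealRing K[T;T⁻¹] :=
  IsLocalization.isPrincipalIdealRing (Submonoid.powers (Polynomial.X : Polynomial K))

theorem IsBezout.exists_mul_add_mul_eq {R : Type*} [CommRing R] [IsBezout R] {x y g : R}
    (hg : ∀ e : R, e ∣ x → e ∣ y → e ∣ g) : ∃ a b : R, a * x + b * y = g := by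
  obtain ⟨w, rfl⟩ := hg _ (IsBezout.gcd_dvd_left x y) (IsBezout.gcd_dvd_right x y)
  obtain ⟨a, b, hab⟩ := IsBezout.gcd_eq_sum x y
  exact ⟨a * w, b * w, by rw [← hab]; ring⟩

theorem Matrix.mulVec_of_mul_add_mul_eq_one {R : Type*} [CommRing R] {a b v₁ v₂ : R} (r : R)
    (h : a * v₁ + b * v₂ = 1) : !![a, b; -v₂, v₁] *ᵥ ![r * v₁, r * v₂] = ![r, 0] := by
  ext i
  fin_cases i <;>
    simp only [mulVec, dotProduct, Fin.sum_univ_two, of_apply, cons_val', cons_val_fin_one,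
      cons_val_zero, cons_val_one, Fin.zero_eta, Fin.mk_one, Fin.isValue]
  · linear_combination r * h
  · ring

namespace QT

lemma Sgn.mul_self {ε : ℂ} (h : Sgn ε) : ε * ε = 1 := by
  rcases h with rfl | rfl <;> norm_num

lemma Sgn.mul {ε δ : ℂ} (h : Sgn ε) (h' : Sgn δ) : Sgn (ε * δ) := by
  rcases h with rfl | rfl <;> rcases h' with rfl | rfl <;> norm_num [Sgn]

lemma symT_iff {u : LP} {ε : ℂ} {c : ℤ} : SymT u ε c ↔ u = C ε * T c * invert u := by
  have key (k : ℤ) : (C ε * T c * invert u : LP).coeff k = ε * u.coeff (c - k) := by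
    rw [mul_assoc, ← mul_assoc, ← single_eq_C_mul_T, AddMonoidAlgebra.coeff_single_mul_apply,
      invert_apply]
    ring_nf
  refine ⟨fun h => ?_, fun h k => ?_⟩
  · exact AddMonoidAlgebra.coeff_injective <| Finsupp.ext fun k => (h k).trans (key k).symm
  · exact (congrArg (AddMonoidAlgebra.coeff · k) h).trans (key k)

lemma SymT.invert_eq {u : LP} {ε : ℂ} {c : ℤ} (h : SymT u ε c) :
    invert u = C ε * T (-c) * u := by
  calc invert u = invert (C ε * T c * invert u) := congrArg invert (symT_iff.mp h)
    _ = C ε * T (-c) * u := by simp only [map_mul, invert_C, invert_T, involutive_invert u]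

lemma SymT.neg {u : LP} {ε : ℂ} {c : ℤ} (h : SymT u ε c) : SymT (-u) ε c := by
  rw [symT_iff] at h ⊢
  rw [map_neg]
  linear_combination -h

lemma SymT.cancel_left {r v : LP} {ε εr : ℂ} {c cr : ℤ} (hr : SymT r εr cr)
    (hrv : SymT (r * v) ε c) (h0 : r ≠ 0) : SymT v (ε * εr) (c - cr) := by
  have hri := hr.invert_eq
  rw [symT_iff, map_mul] at hrv
  rw [symT_iff, map_mul, T_sub]
  apply mul_left_cancel₀ h0
  linear_combination hrv + (C ε * T c * invert v) * hri

def symPart (σ : ℂ) (c : ℤ) (a : LP) : LP := C 2⁻¹ * (a + C σ * T c * invert a)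

lemma symT_symPart {σ : ℂ} (hσ : Sgn σ) (c : ℤ) (a : LP) : SymT (symPart σ c a) σ c := by
  rw [symT_iff, symPart]
  have hσσ : C σ * C σ = (1 : LP) := by rw [← map_mul, hσ.mul_self, map_one]
  have hTT : T c * T (-c) = (1 : LP) := by rw [← T_add, add_neg_cancel, T_zero]
  simp only [map_mul, map_add, invert_C, invert_T, involutive_invert a]
  linear_combination (-(C 2⁻¹ * a * (T c * T (-c)))) * hσσ - (C 2⁻¹ * a) * hTT

lemma symPart_mul_of_symT {v : LP} {σ : ℂ} {d : ℤ} (h : SymT v σ d) (a : LP) :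
    symPart σ (-d) a * v = symPart 1 0 (a * v) := by
  simp only [symPart, map_mul, h.invert_eq, map_one, T_zero, one_mul]
  ring

lemma symPart_mul_add_symPart_mul_eq_one {a b v₁ v₂ : LP} {σ₁ σ₂ : ℂ} {d₁ d₂ : ℤ} (h₁ : SymT v₁ σ₁ d₁)
    (h₂ : SymT v₂ σ₂ d₂) (h : a * v₁ + b * v₂ = 1) :
    symPart σ₁ (-d₁) a * v₁ + symPart σ₂ (-d₂) b * v₂ = 1 := by
  have hinv : invert a * invert v₁ + invert b * invert v₂ = 1 := by
    simpa only [map_add, map_mul, map_one] using congrArg invert h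
  have h2 : C (2⁻¹ : ℂ) * 2 = (1 : LP) := by
    rw [← map_ofNat C 2, ← map_mul, inv_mul_cancel₀ two_ne_zero, map_one]
  rw [symPart_mul_of_symT h₁, symPart_mul_of_symT h₂]
  simp only [symPart, map_mul, map_one, T_zero, one_mul]
  linear_combination C (2⁻¹ : ℂ) * h + C (2⁻¹ : ℂ) * hinv + h2

theorem gcd_vector_reduction_with_symmetry_general
    (u₁ u₂ r : LP) (hu₁ : u₁ ≠ 0)
    (ε₁ ε₂ : ℂ) (c₁ c₂ : ℤ) (hε₁ : Sgn ε₁) (hε₂ : Sgn ε₂)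
    (hs₁ : SymT u₁ ε₁ c₁) (hs₂ : SymT u₂ ε₂ c₂)
    (hrs : HasSym r) (hgcd : IsGCD2 r u₁ u₂) :
    ∃ (P : Matrix (Fin 2) (Fin 2) LP) (εP : Fin 2 → Fin 2 → ℂ) (cP : Fin 2 → Fin 2 → ℤ),
      StrongInv P ∧ (∀ i j, Sgn (εP i j)) ∧ (∀ i j, SymT (P i j) (εP i j) (cP i j)) ∧
      (∀ j, εP j 0 * ε₁ = εP j 1 * ε₂ ∧ cP j 0 + c₁ = cP j 1 + c₂) ∧
      P.mulVec ![u₁, u₂] = ![r, 0] := by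
  obtain ⟨εr, cr, hεr, hsr⟩ := hrs
  have hr : r ≠ 0 := ne_zero_of_dvd_ne_zero hu₁ hgcd.1
  obtain ⟨a, b, hab⟩ := IsBezout.exists_mul_add_mul_eq hgcd.2.2
  obtain ⟨v₁, rfl⟩ := hgcd.1
  obtain ⟨v₂, rfl⟩ := hgcd.2.1
  have hv₁ := hsr.cancel_left hs₁ hr
  have hv₂ := hsr.cancel_left hs₂ hr
  have hv : a * v₁ + b * v₂ = 1 := mul_left_cancel₀ hr (by linear_combination hab)
  have hv' := symPart_mul_add_symPart_mul_eq_one hv₁ hv₂ hv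
  refine ⟨!![symPart (ε₁ * εr) (-(c₁ - cr)) a, symPart (ε₂ * εr) (-(c₂ - cr)) b; -v₂, v₁],
    ![![ε₁ * εr, ε₂ * εr], ![ε₂ * εr, ε₁ * εr]],
    ![![-(c₁ - cr), -(c₂ - cr)], ![c₂ - cr, c₁ - cr]],
    ⟨1, 0, one_ne_zero, ?_⟩, ?_, ?_, ?_, mulVec_of_mul_add_mul_eq_one r hv'⟩
  · rw [det_fin_two_of, map_one, T_zero, one_mul]
    linear_combination hv'
  · simp only [Fin.forall_fin_two, cons_val_zero, cons_val_one]
    exact ⟨⟨hε₁.mul hεr, hε₂.mul hεr⟩, hε₂.mul hεr, hε₁.mul hεr⟩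
  · simp only [Fin.forall_fin_two, of_apply, cons_val_zero, cons_val_one]
    exact ⟨⟨symT_symPart (hε₁.mul hεr) _ a, symT_symPart (hε₂.mul hεr) _ b⟩, hv₂.neg, hv₁⟩
  · simp only [Fin.forall_fin_two, cons_val_zero, cons_val_one]
    exact ⟨⟨by linear_combination εr * (hε₁.mul_self - hε₂.mul_self), by ring⟩, by ring, by ring⟩

/-- reducing a symmetric vector to `(gcd, 0)ᵀ` by a strongly invertible
matrix with compatible symmetry (Lemma 3.9 of the paper). -/
theorem gcd_vector_reduction_with_symmetry
    (u₁ u₂ r : LP) (hu₁ : u₁ ≠ 0) (hu₂ : u₂ ≠ 0)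
    (ε₁ ε₂ : ℂ) (c₁ c₂ : ℤ) (hε₁ : Sgn ε₁) (hε₂ : Sgn ε₂)
    (hs₁ : SymT u₁ ε₁ c₁) (hs₂ : SymT u₂ ε₂ c₂)
    (hrs : HasSym r) (hgcd : IsGCD2 r u₁ u₂) :
    ∃ (P : Matrix (Fin 2) (Fin 2) LP) (εP : Fin 2 → Fin 2 → ℂ) (cP : Fin 2 → Fin 2 → ℤ),
      StrongInv P ∧ (∀ i j, Sgn (εP i j)) ∧ (∀ i j, SymT (P i j) (εP i j) (cP i j)) ∧
      (∀ j, εP j 0 * ε₁ = εP j 1 * ε₂ ∧ cP j 0 + c₁ = cP j 1 + c₂) ∧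
      P.mulVec ![u₁, u₂] = ![r, 0] :=
  gcd_vector_reduction_with_symmetry_general u₁ u₂ r hu₁ ε₁ ε₂ c₁ c₂ hε₁ hε₂ hs₁ hs₂ hrs hgcd

end QT
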